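/- Let ℓ : Δ² → [0,∞)² be an admissible (ℓ ∈ 𝓛) binary loss function. If ℓ is proper, then ℓ is strictly proper: for every p in the relative interior of Δ², p is the unique minimizer over q ∈ Δ² of q ↦ ⟨ℓ(q), p⟩. -/

import Mathlib

open Real Set Filter

noncomputable section

/-- The probability simplex Δ² ⊆ ℝ². -/
def simplex2 : Set (Fin 2 → ℝ) := {p | (∀ i, 0 ≤ p i) ∧ ∑ i, p i = 1}

/-- The relative interior of Δ². -/
def relint2 : Set (Fin 2 → ℝ) := {p | (∀ i, 0 < p i) ∧ ∑ i, p i = 1}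

/-- Properness of a binary loss. -/
def IsProper2 (ℓ : (Fin 2 → ℝ) → Fin 2 → ℝ) : Prop :=
  ∀ p ∈ simplex2, ∀ q ∈ simplex2, ∑ i, ℓ p i * p i ≤ ∑ i, ℓ q i * p i

/-- Strict properness of a binary loss. -/
def IsStrictlyProper2 (ℓ : (Fin 2 → ℝ) → Fin 2 → ℝ) : Prop :=
  IsProper2 ℓ ∧ ∀ p ∈ simplex2, ∀ q ∈ simplex2, q ≠ p →
    ∑ i, ℓ p i * p i < ∑ i, ℓ q i * p i

/-- The local expression `ℓ̃ᵢ(t) = ℓᵢ(t, 1−t)` in the standard parametrization. -/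
def tl (ℓ : (Fin 2 → ℝ) → Fin 2 → ℝ) (i : Fin 2) : ℝ → ℝ := fun t => ℓ ![t, 1 - t] i

/-- Admissibility (membership in 𝓛): `ℓ̃` is C² on (0,1) and `ℓ̃₁'·ℓ̃₂' < 0` there. -/
def IsAdmissible2 (ℓ : (Fin 2 → ℝ) → Fin 2 → ℝ) : Prop :=
  ContDiffOn ℝ 2 (tl ℓ 0) (Set.Ioo 0 1) ∧ ContDiffOn ℝ 2 (tl ℓ 1) (Set.Ioo 0 1) ∧
    ∀ t ∈ Set.Ioo (0 : ℝ) 1, deriv (tl ℓ 0) t * deriv (tl ℓ 1) t < 0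

/-- Curvature of the loss curve with respect to the unit normal pointing towards the
positive quadrant:
`κ⁺_ℓ(t) = sgn(ℓ̃₁')·(ℓ̃₁'ℓ̃₂'' − ℓ̃₁''ℓ̃₂')/(ℓ̃₁'² + ℓ̃₂'²)^{3/2}`. -/
def kplus (ℓ : (Fin 2 → ℝ) → Fin 2 → ℝ) (t : ℝ) : ℝ :=
  Real.sign (deriv (tl ℓ 0) t) *
    (deriv (tl ℓ 0) t * deriv (deriv (tl ℓ 1)) t -
      deriv (deriv (tl ℓ 0)) t * deriv (tl ℓ 1) t) /
    ((deriv (tl ℓ 0) t) ^ 2 + (deriv (tl ℓ 1) t) ^ 2) ^ ((3 : ℝ) / 2)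

/-- Curvature of the log loss curve: `κ⁺_log(t) = t(1−t)/(t² + (1−t)²)^{3/2}`. -/
def klog (t : ℝ) : ℝ := t * (1 - t) / (t ^ 2 + (1 - t) ^ 2) ^ ((3 : ℝ) / 2)

/-- Superprediction set of a binary loss. -/
def spr2 (ℓ : (Fin 2 → ℝ) → Fin 2 → ℝ) : Set (Fin 2 → ℝ) :=
  {x | (∀ i, 0 ≤ x i) ∧ ∃ q ∈ simplex2, ∀ i, ℓ q i ≤ x i}

/-- The η-exponential projection on ℝ². -/
def Eproj2 (η : ℝ) (y : Fin 2 → ℝ) : Fin 2 → ℝ := fun i => Real.exp (-η * y i)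

/-- η-mixability of a binary loss. -/
def IsMixable2 (η : ℝ) (ℓ : (Fin 2 → ℝ) → Fin 2 → ℝ) : Prop :=
  Convex ℝ (Eproj2 η '' spr2 ℓ)

section aux

variable (ℓ : (Fin 2 → ℝ) → Fin 2 → ℝ)

lemma vec_eq (r : Fin 2 → ℝ) (h : r 0 + r 1 = 1) : ![r 0, 1 - r 0] = r := by
  funext i; fin_cases i <;> simp <;> linarith

lemma mem_simplex2' {t : ℝ} (h0 : 0 ≤ t) (h1 : t ≤ 1) : ![t, 1 - t] ∈ simplex2 := by
  refine ⟨fun i => ?_, by simp [Fin.sum_univ_two]⟩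
  fin_cases i <;> simp <;> linarith

lemma min_deriv (hadm : IsAdmissible2 ℓ) (a b : ℝ) {s : ℝ} (hs : s ∈ Set.Ioo (0:ℝ) 1)
    (hmin : ∀ t ∈ Set.Ioo (0:ℝ) 1,
      tl ℓ 0 s * a + tl ℓ 1 s * b ≤ tl ℓ 0 t * a + tl ℓ 1 t * b) :
    deriv (tl ℓ 0) s * a + deriv (tl ℓ 1) s * b = 0 := by
  have h0 : DifferentiableAt ℝ (tl ℓ 0) s :=
    ((hadm.1.differentiableOn two_ne_zero).differentiableAt (isOpen_Ioo.mem_nhds hs))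
  have h1 : DifferentiableAt ℝ (tl ℓ 1) s :=
    ((hadm.2.1.differentiableOn two_ne_zero).differentiableAt (isOpen_Ioo.mem_nhds hs))
  have hloc : IsLocalMin (fun t => tl ℓ 0 t * a + tl ℓ 1 t * b) s :=
    Filter.eventually_of_mem (isOpen_Ioo.mem_nhds hs) (fun t ht => hmin t ht)
  have hd := hloc.deriv_eq_zero
  rw [deriv_fun_add (h0.mul_const a) (h1.mul_const b), deriv_mul_const h0, deriv_mul_const h1] at hd
  exact hd

lemma stationarity (hadm : IsAdmissible2 ℓ) (hprop : IsProper2 ℓ)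
    {s : ℝ} (hs : s ∈ Set.Ioo (0:ℝ) 1) :
    deriv (tl ℓ 0) s * s + deriv (tl ℓ 1) s * (1 - s) = 0 := by
  apply min_deriv ℓ hadm s (1 - s) hs
  intro t ht
  have := hprop ![s, 1 - s] (mem_simplex2' hs.1.le hs.2.le)
    ![t, 1 - t] (mem_simplex2' ht.1.le ht.2.le)
  simpa [Fin.sum_univ_two, tl] using this

lemma strict_interior (hadm : IsAdmissible2 ℓ) (hprop : IsProper2 ℓ)
    {p : Fin 2 → ℝ} (hp : p ∈ relint2) {s : ℝ} (hs : s ∈ Set.Ioo (0:ℝ) 1)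
    (hne : s ≠ p 0) :
    ∑ i, ℓ p i * p i < tl ℓ 0 s * p 0 + tl ℓ 1 s * p 1 := by
  obtain ⟨hppos, hpsum⟩ := hp
  have hpsum' : p 0 + p 1 = 1 := by simpa [Fin.sum_univ_two] using hpsum
  have hps : p ∈ simplex2 := ⟨fun i => (hppos i).le, hpsum⟩
  by_contra hc
  push_neg at hc
  simp only [Fin.sum_univ_two] at hc
  have hmin : ∀ t ∈ Set.Ioo (0:ℝ) 1,
      tl ℓ 0 s * p 0 + tl ℓ 1 s * p 1 ≤ tl ℓ 0 t * p 0 + tl ℓ 1 t * p 1 := by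
    intro t ht
    have := hprop p hps ![t, 1 - t] (mem_simplex2' ht.1.le ht.2.le)
    simp only [Fin.sum_univ_two, tl] at this hc ⊢
    linarith
  have h1 := min_deriv ℓ hadm (p 0) (p 1) hs hmin
  have h2 := stationarity ℓ hadm hprop hs
  have h3 := hadm.2.2 s hs
  have hAB : deriv (tl ℓ 0) s = deriv (tl ℓ 1) s := by
    have : deriv (tl ℓ 0) s * (p 0 - s) + deriv (tl ℓ 1) s * (p 1 - (1 - s)) = 0 := by
      linarith
    have hne' : p 0 - s ≠ 0 := fun h => hne (by linarith)
    have : (deriv (tl ℓ 0) s - deriv (tl ℓ 1) s) * (p 0 - s) = 0 := by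
      linear_combination this - deriv (tl ℓ 1) s * hpsum'
    rcases mul_eq_zero.1 this with h | h
    · linarith
    · exact absurd h hne'
  rw [← hAB] at h2 h3
  have hA0 : deriv (tl ℓ 0) s = 0 := by
    have hr : deriv (tl ℓ 0) s * s + deriv (tl ℓ 0) s * (1 - s) = deriv (tl ℓ 0) s := by ring
    linarith
  rw [hA0] at h3
  simp at h3

end aux

/-- For admissible binary losses, proper implies strictly proper: for
every `p` in the relative interior of Δ², `p` is the unique minimizer over `q ∈ Δ²` of
`q ↦ ⟨ℓ(q), p⟩`. -/
theorem proper_implies_strictlyProper (ℓ : (Fin 2 → ℝ) → Fin 2 → ℝ)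
    (hrange : ∀ p ∈ simplex2, ∀ i, 0 ≤ ℓ p i)
    (hadm : IsAdmissible2 ℓ) (hprop : IsProper2 ℓ) :
    ∀ p ∈ relint2, ∀ q ∈ simplex2, q ≠ p →
      ∑ i, ℓ p i * p i < ∑ i, ℓ q i * p i := by
  intro p hp q hq hne
  obtain ⟨hppos, hpsum⟩ := hp
  have hpsum' : p 0 + p 1 = 1 := by simpa [Fin.sum_univ_two] using hpsum
  have hp' : p ∈ relint2 := ⟨hppos, hpsum⟩
  obtain ⟨hqnn, hqsum⟩ := hq
  have hqsum' : q 0 + q 1 = 1 := by simpa [Fin.sum_univ_two] using hqsum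
  have hq' : q ∈ simplex2 := ⟨hqnn, hqsum⟩
  have hp0 : 0 < p 0 := hppos 0
  have hp1 : 0 < p 1 := hppos 1
  have hp01 : p 0 < 1 := by linarith
  have hq0 : 0 ≤ q 0 := hqnn 0
  have hq1 : 0 ≤ q 1 := hqnn 1
  have hqv : ![q 0, 1 - q 0] = q := vec_eq q hqsum'
  rcases lt_or_eq_of_le hq0 with hq0pos | hq0z
  · rcases lt_or_eq_of_le (by linarith : q 0 ≤ 1) with hq0lt | hq0one
    · -- interior case
      have hne0 : q 0 ≠ p 0 := fun h => hne (by rw [← hqv, h, vec_eq p hpsum'])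
      have := strict_interior ℓ hadm hprop hp' ⟨hq0pos, hq0lt⟩ hne0
      calc ∑ i, ℓ p i * p i < tl ℓ 0 (q 0) * p 0 + tl ℓ 1 (q 0) * p 1 := this
        _ = ∑ i, ℓ q i * p i := by
            simp only [Fin.sum_univ_two, tl, hqv]
    · -- q = ![1, 0]
      have hqe : q = ![(1:ℝ), 0] := by
        funext i; fin_cases i
        · exact hq0one
        · show q 1 = 0; linarith
      subst hqe
      set t : ℝ := (p 0 + 1) / 2 with htdef
      have ht : t ∈ Set.Ioo (0:ℝ) 1 := ⟨by linarith, by linarith⟩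
      have hnet : t ≠ p 0 := by simp only [htdef]; intro h; linarith
      have H1 := strict_interior ℓ hadm hprop hp' ht hnet
      have H2 := hprop ![t, 1 - t] (mem_simplex2' ht.1.le ht.2.le) _ hq'
      have H3 := hprop _ hq' ![t, 1 - t] (mem_simplex2' ht.1.le ht.2.le)
      by_contra hc
      push_neg at hc
      simp only [Fin.sum_univ_two, tl, Matrix.cons_val_zero, Matrix.cons_val_one,
        Matrix.head_cons, mul_one, mul_zero, add_zero] at H1 H2 H3 hc
      have hA : ℓ ![(1:ℝ), 0] 0 ≤ ℓ ![t, 1 - t] 0 := H3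
      have hp1e : p 1 = 1 - p 0 := by linarith
      rw [hp1e] at H1 hc
      nlinarith [mul_pos (sub_pos.2 ht.2) (sub_pos.2 (lt_of_le_of_lt hc H1)),
        mul_nonneg (by linarith : (0:ℝ) ≤ 1 - p 0) (sub_nonneg.2 H2),
        mul_nonneg (sub_nonneg.2 hA) (sub_pos.2 (show p 0 < t by simp only [htdef]; linarith)).le]
  · -- q = ![0, 1]
    have hqe : q = ![(0:ℝ), 1] := by
      funext i; fin_cases i
      · exact hq0z.symm
      · show q 1 = 1; linarith
    subst hqe
    set t : ℝ := p 0 / 2 with htdef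
    have ht : t ∈ Set.Ioo (0:ℝ) 1 := ⟨by linarith, by linarith⟩
    have hnet : t ≠ p 0 := by simp only [htdef]; intro h; linarith
    have H1 := strict_interior ℓ hadm hprop hp' ht hnet
    have H2 := hprop ![t, 1 - t] (mem_simplex2' ht.1.le ht.2.le) _ hq'
    have H3 := hprop _ hq' ![t, 1 - t] (mem_simplex2' ht.1.le ht.2.le)
    by_contra hc
    push_neg at hc
    simp only [Fin.sum_univ_two, tl, Matrix.cons_val_zero, Matrix.cons_val_one,
      Matrix.head_cons, mul_one, mul_zero, zero_add] at H1 H2 H3 hc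
    have hB : ℓ ![(0:ℝ), 1] 1 ≤ ℓ ![t, 1 - t] 1 := H3
    have hp1e : p 1 = 1 - p 0 := by linarith
    rw [hp1e] at H1 hc
    nlinarith [mul_pos ht.1 (sub_pos.2 (lt_of_le_of_lt hc H1)),
      mul_nonneg hp0.le (sub_nonneg.2 H2),
      mul_nonneg (sub_nonneg.2 hB) (sub_pos.2 (show t < p 0 by simp only [htdef]; linarith)).le]
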